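/- Let X be a finite set equipped with a path structure in which every pair of points is connected by a finite path. Suppose for each x ∈ X there is a set S_x ⊆ X such that every path from x to any point outside S_x passes through some point of S_x at positive distance from x, and such that for every x' ∈ S_x ∪ {x} there exists z with q(z|x) > 0 and p(x'|z) > 0. Then the Markov chain with transition operator T(x'|x) = Σ_z p(x'|z) q(z|x) is irreducible: for all x, x' there exists n ≥ 1 with Tⁿ(x'|x) > 0. -/
import Mathlib


/-- n-step transition probabilities. -/
def stepPow {X : Type*} [Fintype X] [DecidableEq X] (T : X → X → ℝ) : ℕ → X → X → ℝ
  | 0 => fun x x' => if x = x' then 1 else 0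
  | n + 1 => fun x x' => ∑ y, stepPow T n x y * T y x'

lemma stepPow_nonneg {X : Type*} [Fintype X] [DecidableEq X] (T : X → X → ℝ)
    (hT : ∀ a b, 0 ≤ T a b) : ∀ n x x', 0 ≤ stepPow T n x x'
  | 0, x, x' => by simp [stepPow]; positivity
  | n + 1, x, x' => by
    simp only [stepPow]
    exact Finset.sum_nonneg fun y _ =>
      mul_nonneg (stepPow_nonneg T hT n x y) (hT y x')

lemma stepPow_one {X : Type*} [Fintype X] [DecidableEq X] (T : X → X → ℝ) (x x' : X) :
    stepPow T 1 x x' = T x x' := by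
  simp [stepPow]

lemma stepPow_add {X : Type*} [Fintype X] [DecidableEq X] (T : X → X → ℝ)
    (m : ℕ) : ∀ (n : ℕ) (x x' : X),
    stepPow T (m + n) x x' = ∑ y, stepPow T m x y * stepPow T n y x'
  | 0, x, x' => by simp [stepPow]
  | n + 1, x, x' => by
    show stepPow T (m + n + 1) x x' = _
    simp only [stepPow, Finset.mul_sum]
    simp_rw [stepPow_add T m n, Finset.sum_mul, mul_assoc]
    rw [Finset.sum_comm]

/-- Corollary: irreducibility of the Simple GSN chain.
X is a finite connected graph.  Suppose for each x there is a "shell" set S x such that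
every walk from x to any point outside S x passes through a point of S x at positive
graph distance from x, and such that every x' ∈ S x ∪ {x} can be reached from x in one
step of the chain (∃ z, q(z|x) > 0 and p(x'|z) > 0).  Then the Markov chain with
transition operator T(x'|x) = Σ_z p(x'|z) q(z|x) is irreducible. -/
theorem simple_gsn_irreducible
    {X Z : Type*} [Fintype X] [DecidableEq X] [Fintype Z]
    (G : SimpleGraph X) (hconn : G.Connected)
    (q : X → Z → ℝ) (p : Z → X → ℝ)
    (hq_nonneg : ∀ x z, 0 ≤ q x z) (hq_sum : ∀ x, ∑ z, q x z = 1)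
    (hp_nonneg : ∀ z x, 0 ≤ p z x) (hp_sum : ∀ z, ∑ x, p z x = 1)
    (S : X → Set X) (hS_sub : ∀ x, S x ⊆ Set.univ)
    (hshell : ∀ x (y : X), y ∉ S x → ∀ w : G.Walk x y,
      ∃ s ∈ S x, s ∈ w.support ∧ 0 < G.dist x s)
    (hreach : ∀ x, ∀ x' ∈ S x ∪ {x}, ∃ z, 0 < q x z ∧ 0 < p z x') :
    ∀ x x' : X, ∃ n : ℕ, 1 ≤ n ∧
      0 < stepPow (fun a b => ∑ z, p z b * q a z) n x x' := by
  set T : X → X → ℝ := fun a b => ∑ z, p z b * q a z with hT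
  have hT_nonneg : ∀ a b, 0 ≤ T a b := fun a b =>
    Finset.sum_nonneg fun z _ => mul_nonneg (hp_nonneg z b) (hq_nonneg a z)
  -- one-step positivity from hreach
  have hstep : ∀ x, ∀ x' ∈ S x ∪ {x}, 0 < T x x' := by
    intro x x' hx'
    obtain ⟨z, hz1, hz2⟩ := hreach x x' hx'
    exact Finset.sum_pos' (fun z _ => mul_nonneg (hp_nonneg z x') (hq_nonneg x z))
      ⟨z, Finset.mem_univ z, mul_pos hz2 hz1⟩
  intro x x'
  -- strong induction on distance
  suffices H : ∀ d : ℕ, ∀ x : X, G.dist x x' = d →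
      ∃ n : ℕ, 1 ≤ n ∧ 0 < stepPow T n x x' by
    exact H (G.dist x x') x rfl
  intro d
  induction d using Nat.strong_induction_on with
  | _ d ih =>
    intro x hd
    by_cases hmem : x' ∈ S x ∪ {x}
    · exact ⟨1, le_refl 1, by rw [stepPow_one]; exact hstep x x' hmem⟩
    · have hx'ne : x' ∉ S x := fun h => hmem (Or.inl h)
      obtain ⟨w, hw⟩ := hconn.exists_walk_length_eq_dist x x'
      obtain ⟨s, hsS, hsw, hsd⟩ := hshell x x' hx'ne w
      -- dist s x' < d
      have h1 : G.dist x s ≤ (w.takeUntil s hsw).length := SimpleGraph.dist_le _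
      have h2 : G.dist s x' ≤ (w.dropUntil s hsw).length := SimpleGraph.dist_le _
      have h3 : (w.takeUntil s hsw).length + (w.dropUntil s hsw).length = w.length := by
        have := congr_arg SimpleGraph.Walk.length (w.take_spec hsw)
        rwa [SimpleGraph.Walk.length_append] at this
      have hlt : G.dist s x' < d := by
        have : G.dist x s + G.dist s x' ≤ d := by
          rw [← hd, ← hw, ← h3]; omega
        omega
      obtain ⟨m, hm1, hm2⟩ := ih (G.dist s x') hlt s rfl
      refine ⟨1 + m, by omega, ?_⟩
      rw [stepPow_add]
      refine Finset.sum_pos' (fun y _ => mul_nonneg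
        (stepPow_nonneg T hT_nonneg 1 x y) (stepPow_nonneg T hT_nonneg m y x'))
        ⟨s, Finset.mem_univ s, ?_⟩
      rw [stepPow_one]
      exact mul_pos (hstep x s (Or.inl hsS)) hm2
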